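/- For every CARET formula f there exists at least one atom A of f such that NexCallerForms(A) = ∅, i.e., A contains no formulas of the form X^c φ. -/
import Mathlib

/-! ### CARET: the linear temporal logic of calls and returns -/

/-- The tags associated to positions/transition rules. -/
inductive Tag : Type
  | call | ret | int
deriving DecidableEq

/-- ω-words over `2^AP × {call, ret, int}`. -/
abbrev CWord (AP : Type) := ℕ → Set AP × Tag

/-- `+1` for a call, `-1` for a return, `0` for an internal action. -/
def tagDelta : Tag → ℤ
  | .call => 1
  | .ret => -1
  | .int => 0

/-- The call/return nesting depth of the word just before position `i`. -/
def wordDepth {AP : Type} (π : CWord AP) : ℕ → ℤ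
  | 0 => 0
  | i + 1 => wordDepth π i + tagDelta (π i).2

/-- `AbsSucc π i j` : `j` is the abstract-successor of position `i` in `π`:
for an internal position it is the next position, for a call it is the matching
return point (the first later position at the same depth), and a `ret` position
has no abstract successor. -/
def AbsSucc {AP : Type} (π : CWord AP) (i j : ℕ) : Prop :=
  match (π i).2 with
  | .int => j = i + 1
  | .call => i < j ∧ wordDepth π j = wordDepth π i ∧
      ∀ k, i < k → k < j → wordDepth π k ≠ wordDepth π i
  | .ret => False

/-- `j` is an unmatched call enclosing position `i`. -/
def UnmatchedCall {AP : Type} (π : CWord AP) (i j : ℕ) : Prop :=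
  j < i ∧ (π j).2 = Tag.call ∧ ∀ k, j < k → k ≤ i → wordDepth π j < wordDepth π k

/-- `CallerSucc π i j` : `j` is the caller-successor of `i`, i.e. the most inner
(= greatest) unmatched call enclosing `i`. -/
def CallerSucc {AP : Type} (π : CWord AP) (i j : ℕ) : Prop :=
  UnmatchedCall π i j ∧ ∀ j', UnmatchedCall π i j' → j' ≤ j

/-- Until over a given successor relation: there is a finite `succ`-path
`h 0 = i, …, h m` with `P` holding before `m` and `Q` at `m`. -/
def UntilVia (succ : ℕ → ℕ → Prop) (P Q : ℕ → Prop) (i : ℕ) : Prop :=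
  ∃ (m : ℕ) (h : ℕ → ℕ), h 0 = i ∧
    (∀ j, j < m → succ (h j) (h (j + 1)) ∧ P (h j)) ∧ Q (h m)

/-- CARET formulas over a set `AP` of atomic propositions
(`AP' = AP ∪ {call, ret, int}`). -/
inductive Caret (AP : Type) : Type
  | atom : AP → Caret AP
  | tag : Tag → Caret AP
  | or : Caret AP → Caret AP → Caret AP
  | not : Caret AP → Caret AP
  | nextG : Caret AP → Caret AP
  | nextA : Caret AP → Caret AP
  | nextC : Caret AP → Caret AP
  | untilG : Caret AP → Caret AP → Caret AP
  | untilA : Caret AP → Caret AP → Caret AP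
  | untilC : Caret AP → Caret AP → Caret AP

/-- The satisfaction relation `(π, i) ⊨ ψ` of CARET. -/
def CSat {AP : Type} (π : CWord AP) : Caret AP → ℕ → Prop
  | .atom e, i => e ∈ (π i).1
  | .tag t, i => (π i).2 = t
  | .or φ ψ, i => CSat π φ i ∨ CSat π ψ i
  | .not φ, i => ¬ CSat π φ i
  | .nextG φ, i => CSat π φ (i + 1)
  | .nextA φ, i => ∃ j, AbsSucc π i j ∧ CSat π φ j
  | .nextC φ, i => ∃ j, CallerSucc π i j ∧ CSat π φ j
  | .untilG φ ψ, i =>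
      UntilVia (fun a b => b = a + 1) (fun k => CSat π φ k) (fun k => CSat π ψ k) i
  | .untilA φ ψ, i =>
      UntilVia (AbsSucc π) (fun k => CSat π φ k) (fun k => CSat π ψ k) i
  | .untilC φ ψ, i =>
      UntilVia (CallerSucc π) (fun k => CSat π φ k) (fun k => CSat π ψ k) i
/-! ### Closure and atoms of a CARET formula -/

/-- The closure `Cl(ψ)`: the smallest set containing `ψ`, `call`, `ret`, `int`,
closed under subformulas, under `X^b(φ U^b χ)` for until formulas, and under
negations of formulas that are not themselves negations. -/
inductive InClosure {AP : Type} (ψ : Caret AP) : Caret AP → Prop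
  | root : InClosure ψ ψ
  | tagMem (t : Tag) : InClosure ψ (Caret.tag t)
  | notSub {φ} : InClosure ψ (Caret.not φ) → InClosure ψ φ
  | nextGSub {φ} : InClosure ψ (Caret.nextG φ) → InClosure ψ φ
  | nextASub {φ} : InClosure ψ (Caret.nextA φ) → InClosure ψ φ
  | nextCSub {φ} : InClosure ψ (Caret.nextC φ) → InClosure ψ φ
  | orLeft {φ χ} : InClosure ψ (Caret.or φ χ) → InClosure ψ φ
  | orRight {φ χ} : InClosure ψ (Caret.or φ χ) → InClosure ψ χ
  | untilGLeft {φ χ} : InClosure ψ (Caret.untilG φ χ) → InClosure ψ φ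
  | untilGRight {φ χ} : InClosure ψ (Caret.untilG φ χ) → InClosure ψ χ
  | untilGNext {φ χ} : InClosure ψ (Caret.untilG φ χ) →
      InClosure ψ (Caret.nextG (Caret.untilG φ χ))
  | untilALeft {φ χ} : InClosure ψ (Caret.untilA φ χ) → InClosure ψ φ
  | untilARight {φ χ} : InClosure ψ (Caret.untilA φ χ) → InClosure ψ χ
  | untilANext {φ χ} : InClosure ψ (Caret.untilA φ χ) →
      InClosure ψ (Caret.nextA (Caret.untilA φ χ))
  | untilCLeft {φ χ} : InClosure ψ (Caret.untilC φ χ) → InClosure ψ φ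
  | untilCRight {φ χ} : InClosure ψ (Caret.untilC φ χ) → InClosure ψ χ
  | untilCNext {φ χ} : InClosure ψ (Caret.untilC φ χ) →
      InClosure ψ (Caret.nextC (Caret.untilC φ χ))
  | negMem {φ} : InClosure ψ φ → (∀ χ, φ ≠ Caret.not χ) → InClosure ψ (Caret.not φ)

/-- `A ⊆ Cl(ψ)` is an atom of `ψ`: it is maximally consistent (membership of a
formula and of its negation are complementary, disjunctions and until formulas
are unfolded consistently) and it contains exactly one of `call`, `ret`, `int`. -/
def IsCaretAtom {AP : Type} (ψ : Caret AP) (A : Set (Caret AP)) : Prop :=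
  (∀ φ ∈ A, InClosure ψ φ) ∧
  (∀ φ, InClosure ψ φ → (∀ χ, φ ≠ Caret.not χ) → (φ ∈ A ↔ Caret.not φ ∉ A)) ∧
  (∀ φ χ, InClosure ψ (Caret.or φ χ) →
    (Caret.or φ χ ∈ A ↔ (φ ∈ A ∨ χ ∈ A))) ∧
  (∀ φ χ, InClosure ψ (Caret.untilG φ χ) →
    (Caret.untilG φ χ ∈ A ↔
      (χ ∈ A ∨ (φ ∈ A ∧ Caret.nextG (Caret.untilG φ χ) ∈ A)))) ∧
  (∀ φ χ, InClosure ψ (Caret.untilA φ χ) →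
    (Caret.untilA φ χ ∈ A ↔
      (χ ∈ A ∨ (φ ∈ A ∧ Caret.nextA (Caret.untilA φ χ) ∈ A)))) ∧
  (∀ φ χ, InClosure ψ (Caret.untilC φ χ) →
    (Caret.untilC φ χ ∈ A ↔
      (χ ∈ A ∨ (φ ∈ A ∧ Caret.nextC (Caret.untilC φ χ) ∈ A)))) ∧
  (∃! t : Tag, Caret.tag t ∈ A)
/-- The constant all-`int` word. -/
def intWord (AP : Type) : CWord AP := fun _ => (∅, Tag.int)

lemma untilVia_unfold (succ : ℕ → ℕ → Prop) (P Q : ℕ → Prop) (i : ℕ) :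
    UntilVia succ P Q i ↔ Q i ∨ (P i ∧ ∃ j, succ i j ∧ UntilVia succ P Q j) := by
  constructor
  · rintro ⟨m, h, h0, steps, qm⟩
    cases m with
    | zero => left; rwa [h0] at qm
    | succ m =>
      right
      obtain ⟨s0, p0⟩ := steps 0 (Nat.succ_pos m)
      rw [h0] at s0 p0
      exact ⟨p0, h 1, s0, m, fun j => h (j + 1), rfl,
        fun j hj => steps (j + 1) (by omega), qm⟩
  · rintro (hq | ⟨hp, j, sij, m, h, h0, steps, qm⟩)
    · exact ⟨0, fun _ => i, rfl, by omega, hq⟩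
    · refine ⟨m + 1, fun k => if k = 0 then i else h (k - 1), rfl, ?_, ?_⟩
      · intro k hk
        cases k with
        | zero => simpa [h0] using ⟨sij, hp⟩
        | succ k =>
          have := steps k (by omega)
          simpa using this
      · simpa using qm

lemma no_callerSucc {AP : Type} (i j : ℕ) : ¬ CallerSucc (intWord AP) i j := by
  rintro ⟨⟨_, hc, _⟩, _⟩
  simp [intWord] at hc

/-- For every CARET formula `f` there is at least one atom
`A` of `f` with `NexCallerForms(A) = ∅`, i.e. containing no formula of the
form `X^c φ`. -/
theorem exists_atom_without_caller_next {AP : Type} (f : Caret AP) :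
    ∃ A : Set (Caret AP), IsCaretAtom f A ∧ ∀ φ : Caret AP, Caret.nextC φ ∉ A := by
  classical
  set π : CWord AP := intWord AP with hπ
  refine ⟨{φ | InClosure f φ ∧ CSat π φ 0}, ⟨?_, ?_, ?_, ?_, ?_, ?_, ?_⟩, ?_⟩
  · exact fun φ hφ => hφ.1
  · intro φ hφ hn
    constructor
    · rintro ⟨_, hs⟩ ⟨_, hns⟩
      exact hns hs
    · intro hna
      refine ⟨hφ, ?_⟩
      by_contra hs
      exact hna ⟨InClosure.negMem hφ hn, hs⟩
  · intro φ χ h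
    constructor
    · rintro ⟨_, hs | hs⟩
      · exact Or.inl ⟨InClosure.orLeft h, hs⟩
      · exact Or.inr ⟨InClosure.orRight h, hs⟩
    · rintro (⟨_, hs⟩ | ⟨_, hs⟩)
      · exact ⟨h, Or.inl hs⟩
      · exact ⟨h, Or.inr hs⟩
  · intro φ χ h
    have hiff : CSat π (Caret.untilG φ χ) 0 ↔
        CSat π χ 0 ∨ (CSat π φ 0 ∧ CSat π (Caret.nextG (Caret.untilG φ χ)) 0) := by
      rw [show CSat π (Caret.untilG φ χ) 0 =
        UntilVia (fun a b => b = a + 1) (fun k => CSat π φ k) (fun k => CSat π χ k) 0 from rfl,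
        untilVia_unfold]
      constructor
      · rintro (hq | ⟨hp, j, rfl, hu⟩)
        · exact Or.inl hq
        · exact Or.inr ⟨hp, hu⟩
      · rintro (hq | ⟨hp, hu⟩)
        · exact Or.inl hq
        · exact Or.inr ⟨hp, 1, rfl, hu⟩
    constructor
    · rintro ⟨_, hs⟩
      rcases hiff.mp hs with hq | ⟨hp, hn⟩
      · exact Or.inl ⟨InClosure.untilGRight h, hq⟩
      · exact Or.inr ⟨⟨InClosure.untilGLeft h, hp⟩, ⟨InClosure.untilGNext h, hn⟩⟩
    · rintro (⟨_, hq⟩ | ⟨⟨_, hp⟩, ⟨_, hn⟩⟩)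
      · exact ⟨h, hiff.mpr (Or.inl hq)⟩
      · exact ⟨h, hiff.mpr (Or.inr ⟨hp, hn⟩)⟩
  · intro φ χ h
    have hiff : CSat π (Caret.untilA φ χ) 0 ↔
        CSat π χ 0 ∨ (CSat π φ 0 ∧ CSat π (Caret.nextA (Caret.untilA φ χ)) 0) := by
      rw [show CSat π (Caret.untilA φ χ) 0 =
        UntilVia (AbsSucc π) (fun k => CSat π φ k) (fun k => CSat π χ k) 0 from rfl,
        untilVia_unfold]
      rfl
    constructor
    · rintro ⟨_, hs⟩
      rcases hiff.mp hs with hq | ⟨hp, hn⟩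
      · exact Or.inl ⟨InClosure.untilARight h, hq⟩
      · exact Or.inr ⟨⟨InClosure.untilALeft h, hp⟩, ⟨InClosure.untilANext h, hn⟩⟩
    · rintro (⟨_, hq⟩ | ⟨⟨_, hp⟩, ⟨_, hn⟩⟩)
      · exact ⟨h, hiff.mpr (Or.inl hq)⟩
      · exact ⟨h, hiff.mpr (Or.inr ⟨hp, hn⟩)⟩
  · intro φ χ h
    have hiff : CSat π (Caret.untilC φ χ) 0 ↔
        CSat π χ 0 ∨ (CSat π φ 0 ∧ CSat π (Caret.nextC (Caret.untilC φ χ)) 0) := by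
      rw [show CSat π (Caret.untilC φ χ) 0 =
        UntilVia (CallerSucc π) (fun k => CSat π φ k) (fun k => CSat π χ k) 0 from rfl,
        untilVia_unfold]
      rfl
    constructor
    · rintro ⟨_, hs⟩
      rcases hiff.mp hs with hq | ⟨hp, hn⟩
      · exact Or.inl ⟨InClosure.untilCRight h, hq⟩
      · exact Or.inr ⟨⟨InClosure.untilCLeft h, hp⟩, ⟨InClosure.untilCNext h, hn⟩⟩
    · rintro (⟨_, hq⟩ | ⟨⟨_, hp⟩, ⟨_, hn⟩⟩)
      · exact ⟨h, hiff.mpr (Or.inl hq)⟩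
      · exact ⟨h, hiff.mpr (Or.inr ⟨hp, hn⟩)⟩
  · refine ⟨Tag.int, ⟨InClosure.tagMem Tag.int, rfl⟩, ?_⟩
    intro t ht
    have : (π 0).2 = t := ht.2
    simpa [hπ, intWord] using this.symm
  · rintro φ ⟨_, j, hcs, _⟩
    exact no_callerSucc 0 j hcs
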